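/- arXiv:1307.6812 — 2 statements merged into one kernel-verified Lean document; each statement's English description precedes it below -/
import Mathlib

section
/- Let b ∈ B have infinite order, and let (f,b) ∈ A ≀ B. Then (f,b) is conjugate to (1,b) in A ≀ B (where 1 is the trivial function) if and only if π_t(f) = e_A for every t ∈ B, where π_t(f) = ∏_{j∈ℤ} f(b^j t) (ordered with larger j to the left). -/
section Aux

variable {A B : Type*} [Group A] [Group B]

lemma wc_inj (b : B) (hb : ∀ k : ℤ, b ^ k = 1 → k = 0) (t : B) :
    Function.Injective (fun k : ℤ => b ^ k * t) := by
  intro k l hkl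
  simp only [mul_left_cancel_iff, mul_right_cancel_iff] at hkl
  have h1 : b ^ (k - l) = 1 := by rw [zpow_sub, hkl, mul_inv_cancel]
  have := hb _ h1
  omega

lemma wc_bound (g : B → A) (hg : (Function.mulSupport g).Finite) (b : B)
    (hb : ∀ k : ℤ, b ^ k = 1 → k = 0) (t : B) :
    ∃ N : ℕ, ∀ j : ℤ, (N : ℤ) < |j| → g (b ^ j * t) = 1 := by
  have hS : ((fun k : ℤ => b ^ k * t) ⁻¹' Function.mulSupport g).Finite :=
    hg.preimage ((wc_inj b hb t).injOn)
  refine ⟨hS.toFinset.sup Int.natAbs, fun j hj => ?_⟩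
  by_contra hne
  have hjS : j ∈ hS.toFinset := by
    simp [Set.Finite.mem_toFinset, Function.mulSupport, hne]
  have h2 := Finset.le_sup (f := Int.natAbs) hjS
  have h3 : |j| = (j.natAbs : ℤ) := Int.abs_eq_natAbs j
  omega

def wpProd {A B : Type*} [Group A] [Group B] (f : B → A) (b : B) (t : B) (N : ℕ) : A :=
  ((List.range (N + 1)).map (fun i : ℕ => f (b ^ (-(i : ℤ)) * t))).prod

def orderedProd' {A : Type*} [Group A] (F : ℤ → A) (M : ℕ) : A :=
  ((List.range (2 * M + 1)).map (fun i : ℕ => F ((M : ℤ) - (i : ℤ)))).prod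

lemma wc_tele (f h : B → A) (b : B) (hrec : ∀ x, h x = f x * h (b⁻¹ * x)) :
    ∀ (n : ℕ) (s : B), h (b ^ (n : ℤ) * s) =
      ((List.range n).map (fun i : ℕ => f (b ^ ((n : ℤ) - (i : ℤ)) * s))).prod * h s := by
  intro n
  induction n with
  | zero => intro s; simp
  | succ n ih =>
    intro s
    have hcast : ((n + 1 : ℕ) : ℤ) = (n : ℤ) + 1 := by push_cast; ring
    have step : h (b ^ ((n : ℤ) + 1) * s) = f (b ^ ((n : ℤ) + 1) * s) * h (b ^ (n : ℤ) * s) := by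
      rw [hrec (b ^ ((n : ℤ) + 1) * s)]
      congr 2
      group
    rw [hcast, step, ih s, ← mul_assoc, List.range_succ_eq_map, List.map_cons,
      List.prod_cons, List.map_map]
    congr 1
    congr 1
    congr 1
    apply List.map_congr_left
    intro i _
    simp only [Function.comp_apply]
    congr 3
    push_cast; ring

lemma wc_prod_ones {l : List ℕ} {g : ℕ → A} (hg : ∀ i ∈ l, g i = 1) :
    (l.map g).prod = 1 := by
  apply List.prod_eq_one
  intro x hx
  obtain ⟨i, hi, rfl⟩ := List.mem_map.mp hx
  exact hg i hi

lemma wc_stab (f : B → A) (b : B) (t : B) (N : ℕ)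
    (hthr : ∀ j : ℤ, j < -(N : ℤ) → f (b ^ j * t) = 1) :
    ∀ N' : ℕ, N ≤ N' → wpProd f b t N' = wpProd f b t N := by
  intro N'
  induction N' with
  | zero => intro hN; simp [Nat.le_zero.mp hN]
  | succ N' ih =>
    intro hN
    rcases Nat.lt_or_ge N (N' + 1) with hlt | hge
    · have hN' : N ≤ N' := by omega
      have : wpProd f b t (N' + 1) = wpProd f b t N' * f (b ^ (-((N' + 1 : ℕ) : ℤ)) * t) := by
        unfold wpProd
        rw [List.range_succ, List.map_append, List.prod_append, List.map_singleton,
          List.prod_singleton]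
      rw [this, hthr _ (by push_cast; omega), mul_one, ih hN']
    · have : N = N' + 1 := by omega
      rw [this]

lemma wc_peel (f : B → A) (b : B) (t : B) (N : ℕ) :
    wpProd f b t (N + 1) = f t * wpProd f b (b⁻¹ * t) N := by
  unfold wpProd
  rw [List.range_succ_eq_map, List.map_cons, List.prod_cons, List.map_map]
  congr 1
  · simp
  · congr 1
    apply List.map_congr_left
    intro i _
    simp only [Function.comp_apply]
    congr 1
    rw [← mul_assoc]
    congr 1
    rw [← zpow_neg_one, ← zpow_add]
    congr 1
    push_cast; ring

lemma orderedProd_eq {A : Type*} [Group A] (F : ℤ → A) (M : ℕ)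
    (OP : (ℤ → A) → ℕ → A)
    (hOP : OP F M = (List.map (fun i => F ((M : ℤ) - i))
      (do let a ← List.range (2 * M + 1); pure (↑a : ℤ))).prod) :
    OP F M = orderedProd' F M := by
  rw [hOP]
  unfold orderedProd'
  simp only [List.pure_def, List.bind_eq_flatMap, ← List.map_eq_flatMap, List.map_map]
  rfl

end Aux



/-- Multiplication in the restricted wreath product `A ≀ B`:
`(f,b)(g,c) = (f · g^b, bc)` where `g^b (x) = g (b⁻¹ x)`. -/
def wmul {A B : Type*} [Group A] [Group B] (p q : (B → A) × B) : (B → A) × B :=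
  (fun x => p.1 x * q.1 (p.2⁻¹ * x), p.2 * q.2)

/-- The ordered product `F(M) · F(M-1) · ⋯ · F(-M)` (larger indices on the left). -/
def orderedProd {A : Type*} [Group A] (F : ℤ → A) (M : ℕ) : A :=
  ((List.range (2 * M + 1)).map (fun i => F ((M : ℤ) - i))).prod

lemma orderedProd_eq_op' {A : Type*} [Group A] (F : ℤ → A) (M : ℕ) :
    orderedProd F M = orderedProd' F M := by
  unfold orderedProd orderedProd'
  simp only [List.pure_def, List.bind_eq_flatMap, ← List.map_eq_flatMap, List.map_map]
  rfl


/-- Let `b ∈ B` have infinite order and `(f,b) ∈ A ≀ B`.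
Then `(f,b)` is conjugate to `(1,b)` if and only if `π_t(f) = e_A` for every
`t ∈ B`, where `π_t(f) = ∏_{j ∈ ℤ} f(bʲt)` (larger `j` to the left), expressed
as its stable truncations. -/
theorem wreath_conj_trivial_iff {A B : Type*} [Group A] [Group B]
    (f : B → A) (b : B)
    (hf : (Function.mulSupport f).Finite)
    (hb : ∀ k : ℤ, b ^ k = 1 → k = 0) :
    (∃ (h : B → A) (z : B), (Function.mulSupport h).Finite ∧
        wmul (f, b) (h, z) = wmul (h, z) ((fun _ => 1), b)) ↔
      (∀ t : B, ∀ M : ℕ, (∀ j : ℤ, (M : ℤ) < |j| → f (b ^ j * t) = 1) →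
        orderedProd (fun j => f (b ^ j * t)) M = 1) := by
  constructor
  · -- Forward direction
    rintro ⟨h, z, hhfin, heq⟩ t M hM
    have hrec : ∀ x, h x = f x * h (b⁻¹ * x) := by
      intro x
      have := congrFun (congrArg Prod.fst heq) x
      simp only [wmul] at this
      rw [mul_one] at this
      exact this.symm
    obtain ⟨K, hK⟩ := wc_bound h hhfin b hb t
    set n : ℕ := K + M + 1 with hn
    have habs : ∀ m : ℕ, |((m : ℕ) : ℤ)| = (m : ℤ) := fun m => abs_of_nonneg (by positivity)
    have e1 : h (b ^ ((n : ℕ) : ℤ) * t) = 1 := hK _ (by rw [habs]; push_cast; omega)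
    have e2 : h (b ^ (-((n : ℕ) : ℤ)) * t) = 1 := hK _ (by rw [abs_neg, habs]; push_cast; omega)
    -- e3 : climb from level M to level n, all factors trivial
    have e3 : h (b ^ ((n : ℕ) : ℤ) * t) = h (b ^ ((M : ℕ) : ℤ) * t) := by
      have hc : ((n - M : ℕ) : ℤ) = (n : ℤ) - M := by omega
      have := wc_tele f h b hrec (n - M) (b ^ ((M : ℕ) : ℤ) * t)
      rw [hc] at this
      have hpt : b ^ ((n : ℤ) - (M : ℤ)) * (b ^ ((M : ℕ) : ℤ) * t) = b ^ ((n : ℕ) : ℤ) * t := by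
        rw [← mul_assoc, ← zpow_add]
        congr 1
        ring
      rw [hpt] at this
      rw [this]
      have hprod : ((List.range (n - M)).map
          (fun i : ℕ => f (b ^ ((n : ℤ) - (M : ℤ) - (i : ℤ)) * (b ^ ((M : ℕ) : ℤ) * t)))).prod = 1 := by
        apply wc_prod_ones
        intro i hi
        rw [List.mem_range] at hi
        have hpt2 : b ^ ((n : ℤ) - (M : ℤ) - (i : ℤ)) * (b ^ ((M : ℕ) : ℤ) * t)
            = b ^ ((n : ℤ) - (i : ℤ)) * t := by
          rw [← mul_assoc, ← zpow_add]; congr 1; ring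
        rw [hpt2]
        apply hM
        have : |(n : ℤ) - (i : ℤ)| = (n : ℤ) - i := abs_of_nonneg (by omega)
        omega
      rw [hprod, one_mul]
    -- e5' : level -(M+1) is trivial
    have e5' : h (b ^ (-((M : ℕ) : ℤ) - 1) * t) = 1 := by
      have hc : ((n - M - 1 : ℕ) : ℤ) = (n : ℤ) - M - 1 := by omega
      have := wc_tele f h b hrec (n - M - 1) (b ^ (-((n : ℕ) : ℤ)) * t)
      rw [hc] at this
      have hpt : b ^ ((n : ℤ) - (M : ℤ) - 1) * (b ^ (-((n : ℕ) : ℤ)) * t)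
          = b ^ (-((M : ℕ) : ℤ) - 1) * t := by
        rw [← mul_assoc, ← zpow_add]; congr 1; ring
      rw [hpt] at this
      rw [this]
      have hprod : ((List.range (n - M - 1)).map
          (fun i : ℕ => f (b ^ ((n : ℤ) - (M : ℤ) - 1 - (i : ℤ)) * (b ^ (-((n : ℕ) : ℤ)) * t)))).prod = 1 := by
        apply wc_prod_ones
        intro i hi
        rw [List.mem_range] at hi
        have hpt2 : b ^ ((n : ℤ) - (M : ℤ) - 1 - (i : ℤ)) * (b ^ (-((n : ℕ) : ℤ)) * t)
            = b ^ (-((M : ℤ) + 1 + i)) * t := by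
          rw [← mul_assoc, ← zpow_add]; congr 1; ring
        rw [hpt2]
        apply hM
        have : |(-((M : ℤ) + 1 + i))| = (M : ℤ) + 1 + i := by
          rw [abs_neg]; exact abs_of_nonneg (by omega)
        omega
      rw [hprod, one_mul, e2]
    -- e4 : telescoping across the window [-M-1, M]
    have e4 : h (b ^ ((M : ℕ) : ℤ) * t) = orderedProd (fun j => f (b ^ j * t)) M
        * h (b ^ (-((M : ℕ) : ℤ) - 1) * t) := by
      have hc : ((2 * M + 1 : ℕ) : ℤ) = 2 * (M : ℤ) + 1 := by push_cast; ring
      have := wc_tele f h b hrec (2 * M + 1) (b ^ (-((M : ℕ) : ℤ) - 1) * t)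
      rw [hc] at this
      have hpt : b ^ (2 * (M : ℤ) + 1) * (b ^ (-((M : ℕ) : ℤ) - 1) * t)
          = b ^ ((M : ℕ) : ℤ) * t := by
        rw [← mul_assoc, ← zpow_add]; congr 1; ring
      rw [hpt] at this
      rw [this]
      congr 1
      rw [orderedProd_eq_op']
      unfold orderedProd'
      beta_reduce
      apply congrArg List.prod
      apply List.map_congr_left
      intro i _
      have hpt2 : b ^ (2 * (M : ℤ) + 1 - (i : ℤ)) * (b ^ (-((M : ℕ) : ℤ) - 1) * t)
          = b ^ ((M : ℤ) - (i : ℤ)) * t := by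
        rw [← mul_assoc, ← zpow_add]; congr 1; ring
      rw [hpt2]
    rw [e5', mul_one] at e4
    rw [← e4, ← e3, e1]
  · -- Reverse direction
    intro hπ
    choose Nt hNt using fun t => wc_bound f hf b hb t
    set h : B → A := fun t => wpProd f b t (Nt t) with hh
    have hthr : ∀ t : B, ∀ j : ℤ, j < -((Nt t : ℕ) : ℤ) → f (b ^ j * t) = 1 := by
      intro t j hj
      apply hNt
      have := neg_le_abs j
      omega
    have hrec : ∀ x, h x = f x * h (b⁻¹ * x) := by
      intro x
      set N : ℕ := max (Nt x) (Nt (b⁻¹ * x)) with hN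
      have h1 : h x = wpProd f b x (N + 1) :=
        (wc_stab f b x (Nt x) (hthr x) (N + 1) (by omega)).symm
      have h2 : wpProd f b (b⁻¹ * x) N = h (b⁻¹ * x) :=
        wc_stab f b (b⁻¹ * x) (Nt (b⁻¹ * x)) (hthr (b⁻¹ * x)) N (by omega)
      rw [h1, wc_peel, h2]
    have hOP : ∀ t : B, (∀ j : ℤ, 1 ≤ j → f (b ^ j * t) = 1) → h t = 1 := by
      intro t hpos
      have hπt := hπ t (Nt t) (hNt t)
      rw [orderedProd_eq_op'] at hπt
      unfold orderedProd' at hπt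
      have hsplit : (2 * Nt t + 1 : ℕ) = Nt t + (Nt t + 1) := by ring
      beta_reduce at hπt
      rw [hsplit, List.range_add, List.map_append, List.prod_append, List.map_map] at hπt
      have h1 : ((List.range (Nt t)).map
          (fun i : ℕ => f (b ^ ((Nt t : ℤ) - (i : ℤ)) * t))).prod = 1 := by
        apply wc_prod_ones
        intro i hi
        rw [List.mem_range] at hi
        exact hpos _ (by omega)
      have h2 : ((List.range (Nt t + 1)).map
          ((fun i : ℕ => f (b ^ ((Nt t : ℤ) - (i : ℤ)) * t)) ∘ (fun x => Nt t + x))).prod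
            = wpProd f b t (Nt t) := by
        unfold wpProd
        apply congrArg List.prod
        apply List.map_congr_left
        intro i _
        simp only [Function.comp_apply]
        congr 3
        push_cast; ring
      rw [h1, h2, one_mul] at hπt
      exact hπt
    have hsupp : (Function.mulSupport h).Finite := by
      have claim1 : ∀ x, h x ≠ 1 → ∃ i : ℕ, f (b ^ (-(i : ℤ)) * x) ≠ 1 := by
        intro x hx
        by_contra hc
        push_neg at hc
        apply hx
        show wpProd f b x (Nt x) = 1
        exact wc_prod_ones (fun i _ => hc i)
      have claim2 : ∀ x, h x ≠ 1 → ∃ j : ℤ, 1 ≤ j ∧ f (b ^ j * x) ≠ 1 := by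
        intro x hx
        by_contra hc
        push_neg at hc
        exact hx (hOP x (fun j hj => hc j hj))
      set T : B → B → Set B := fun s s' =>
        {x | ∃ p q : ℤ, 0 ≤ p ∧ q ≤ -1 ∧ x = b ^ p * s ∧ x = b ^ q * s'} with hT
      have hTfin : ∀ s s', (T s s').Finite := by
        intro s s'
        rcases (T s s').eq_empty_or_nonempty with hE | ⟨x₀, p₀, q₀, hp₀, hq₀, hx₀, hx₀'⟩
        · rw [hE]; exact Set.finite_empty
        · apply Set.Finite.subset ((Set.finite_Icc (0 : ℤ) (p₀ - q₀)).image (fun p : ℤ => b ^ p * s))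
          rintro x ⟨p, q, hp, hq, rfl, hxq⟩
          have hs1 : b ^ (p - q) * s = s' := by
            have hstep : b ^ (p - q) * s = (b ^ q)⁻¹ * (b ^ p * s) := by group
            rw [hstep, hxq]
            group
          have hxq0 : b ^ p₀ * s = b ^ q₀ * s' := by rw [← hx₀, hx₀']
          have hs2 : b ^ (p₀ - q₀) * s = s' := by
            have hstep : b ^ (p₀ - q₀) * s = (b ^ q₀)⁻¹ * (b ^ p₀ * s) := by group
            rw [hstep, hxq0]
            group
          have hpq : p - q = p₀ - q₀ := wc_inj b hb s (hs1.trans hs2.symm)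
          refine ⟨p, ?_, rfl⟩
          simp only [Set.mem_Icc]
          omega
      apply Set.Finite.subset
        (Set.Finite.biUnion hf (fun s _ => Set.Finite.biUnion hf (fun s' _ => hTfin s s')))
      intro x hx
      obtain ⟨i, hi⟩ := claim1 x hx
      obtain ⟨j, hj1, hj2⟩ := claim2 x hx
      simp only [Set.mem_iUnion]
      refine ⟨b ^ (-(i : ℤ)) * x, hi, b ^ j * x, hj2, ?_⟩
      exact ⟨(i : ℤ), -j, by positivity, by omega, by group, by group⟩
    refine ⟨h, (1 : B), hsupp, ?_⟩
    simp only [wmul]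
    refine Prod.ext ?_ ?_
    · funext x
      simp only
      rw [mul_one]
      exact (hrec x).symm
    · simp
end

section
/- Let b ∈ B have infinite order and suppose (f,b) is not conjugate to (1,b) in A ≀ B. If (h₀, z₀) is any conjugator of (f,b) and (g,c), then there exist integers k, j and a conjugator (h, z) of (f,b) and (g,c) with z = b^{k-j} z₀ such that z^{-1} x ∈ supp(g) for some x ∈ supp(f) ∩ ⟨b⟩t for a coset ⟨b⟩t on which π_t(f) ≠ e_A. Consequently, d_B(e, z) ≤ d_B(e, x) + d_B(e, z^{-1}x) for some x ∈ supp(f) and z^{-1}x ∈ supp(g). -/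
/-!
If `π_t(f) ≠ 1` on a coset `⟨b⟩t`, the conjugacy equation `f(x) h(b⁻¹x) = h(x) g(z⁻¹x)` forces
`g` to be nontrivial somewhere on `z⁻¹⟨b⟩t`: otherwise `h(b^j t) = f(b^j t) h(b^(j-1) t)` for all
`j`, and telescoping over a window containing the finite supports gives `π_t(f) = 1`. Such a coset
exists: if every `π_t(f)` is trivial, the tail products `h(x) = f(x) f(b⁻¹x) f(b⁻²x) ⋯` are
finitely supported and `(h, 1)` conjugates `(f, b)` to `(1, b)`. Given `x = b^k t ∈ supp f` and
`z₀⁻¹ b^j t ∈ supp g`, the conjugator `(f, b)^(k-j) (h₀, z₀)` has `B`-component `z = b^(k-j) z₀`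
with `z⁻¹x = z₀⁻¹ b^j t`, and the triangle inequality finishes.
-/

open Function

section OrderedProducts

variable {A : Type*} [Group A]

lemma orderedProd_eq_prod_map_range (F : ℤ → A) (M : ℕ) :
    orderedProd F M = ((List.range (2 * M + 1)).map fun i : ℕ => F ((M : ℤ) - i)).prod := by
  simp only [orderedProd, List.bind_eq_flatMap, List.pure_def, ← List.map_eq_flatMap, List.map_map]
  rfl

lemma orderedProd_zero (F : ℤ → A) : orderedProd F 0 = F 0 := by
  simp [orderedProd_eq_prod_map_range]

lemma orderedProd_succ (F : ℤ → A) (M : ℕ) :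
    orderedProd F (M + 1) = F (M + 1) * orderedProd F M * F (-(M + 1)) := by
  rw [orderedProd_eq_prod_map_range, orderedProd_eq_prod_map_range,
    show 2 * (M + 1) + 1 = 2 * M + 1 + 1 + 1 by ring, List.prod_range_succ, List.prod_range_succ']
  push_cast
  ring_nf

lemma exists_ne_one_of_orderedProd_ne_one {F : ℤ → A} {M : ℕ} (h : orderedProd F M ≠ 1) :
    ∃ i, F i ≠ 1 := by
  contrapose! h
  rw [orderedProd_eq_prod_map_range]
  exact List.prod_eq_one (by simp [h])

lemma orderedProd_eq_of_le {F : ℤ → A} {M N : ℕ} (hF : ∀ i : ℤ, (M : ℤ) < |i| → F i = 1)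
    (hMN : M ≤ N) : orderedProd F N = orderedProd F M := by
  induction N, hMN using Nat.le_induction with
  | base => rfl
  | succ N hMN ih =>
    rw [orderedProd_succ, ih, hF (N + 1) (by rw [abs_of_nonneg (by positivity)]; omega),
      hF (-(N + 1)) (by rw [abs_neg, abs_of_nonneg (by positivity)]; omega), one_mul, mul_one]

lemma eq_orderedProd_mul_of_forall_eq_mul {F H : ℤ → A} (hrec : ∀ j, H j = F j * H (j - 1))
    (M : ℕ) : H M = orderedProd F M * H (-M - 1) := by
  induction M with
  | zero => simpa [orderedProd_zero] using hrec 0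
  | succ M ih =>
    rw [Nat.cast_succ, hrec, add_sub_cancel_right, ih, hrec (-M - 1), orderedProd_succ]
    simp only [mul_assoc, sub_sub, neg_add']

/-- Telescoping: `H K = orderedProd F K * H (-K - 1)`, and both values of `H` are `1` for large
`K`. -/
lemma orderedProd_eq_one_of_forall_eq_mul {F H : ℤ → A} {M M' : ℕ}
    (hrec : ∀ j, H j = F j * H (j - 1)) (hF : ∀ i : ℤ, (M : ℤ) < |i| → F i = 1)
    (hH : ∀ i : ℤ, (M' : ℤ) < |i| → H i = 1) : orderedProd F M = 1 := by
  set K := max M M' + 1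
  have htop : H K = 1 := hH K (by rw [abs_of_nonneg (by positivity)]; omega)
  have hbot : H (-K - 1) = 1 := hH (-K - 1) (by rw [abs_of_nonpos (by omega)]; omega)
  have := eq_orderedProd_mul_of_forall_eq_mul hrec K
  rw [htop, hbot, mul_one, orderedProd_eq_of_le hF (by omega : M ≤ K)] at this
  exact this.symm

def lowerProd (F : ℤ → A) (N : ℕ) : A :=
  ((List.range N).map fun i : ℕ => F (-i)).prod

lemma lowerProd_succ (F : ℤ → A) (N : ℕ) : lowerProd F (N + 1) = lowerProd F N * F (-N) :=
  List.prod_range_succ _ _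

lemma lowerProd_succ' (F : ℤ → A) (N : ℕ) :
    lowerProd F (N + 1) = F 0 * lowerProd (fun i => F (i - 1)) N := by
  simp only [lowerProd, List.prod_range_succ', Nat.cast_succ, Nat.cast_zero, neg_zero]
  ring_nf

lemma lowerProd_eq_of_le {F : ℤ → A} {N N' : ℕ} (hF : ∀ i : ℕ, N ≤ i → F (-i) = 1)
    (hN : N ≤ N') : lowerProd F N' = lowerProd F N := by
  induction N', hN using Nat.le_induction with
  | base => rfl
  | succ N' hN ih => rw [lowerProd_succ, hF N' hN, mul_one, ih]

lemma orderedProd_eq_lowerProd {F : ℤ → A} (htop : ∀ i : ℤ, 0 < i → F i = 1) (M : ℕ) :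
    orderedProd F M = lowerProd F (M + 1) := by
  induction M with
  | zero => simp [orderedProd_zero, lowerProd]
  | succ M ih =>
    rw [orderedProd_succ, ih, htop _ (by positivity), one_mul, lowerProd_succ (N := M + 1)]
    push_cast
    rfl

open Classical in
/-- The infinite product `F 0 * F (-1) * F (-2) * ⋯`, for `F` eventually `1` at `-∞`
(junk value `1` otherwise). -/
noncomputable def tailProd (F : ℤ → A) : A :=
  if h : ∃ N : ℕ, ∀ i : ℕ, N ≤ i → F (-i) = 1 then lowerProd F h.choose else 1

lemma tailProd_eq_lowerProd {F : ℤ → A} {N : ℕ} (hN : ∀ i : ℕ, N ≤ i → F (-i) = 1) :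
    tailProd F = lowerProd F N := by
  have h : ∃ N : ℕ, ∀ i : ℕ, N ≤ i → F (-i) = 1 := ⟨N, hN⟩
  rw [tailProd, dif_pos h, ← lowerProd_eq_of_le h.choose_spec (le_max_left _ N),
    lowerProd_eq_of_le hN (le_max_right _ _)]

lemma tailProd_eq_mul_tailProd {F : ℤ → A} {N : ℕ} (hN : ∀ i : ℕ, N ≤ i → F (-i) = 1) :
    tailProd F = F 0 * tailProd fun i => F (i - 1) := by
  have hN' : ∀ i : ℕ, N ≤ i → F (-i - 1) = 1 := fun i hi => by
    simpa [neg_sub_left, add_comm] using hN (i + 1) (by omega)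
  rw [tailProd_eq_lowerProd (F := fun i => F (i - 1)) hN',
    tailProd_eq_lowerProd (N := N + 1) fun i hi => hN i (by omega), lowerProd_succ']

lemma exists_ne_one_of_tailProd_ne_one {F : ℤ → A} (h : tailProd F ≠ 1) :
    ∃ i : ℕ, F (-i) ≠ 1 := by
  contrapose! h
  rw [tailProd_eq_lowerProd (N := 0) fun i _ => h i, lowerProd]
  simp

lemma tailProd_eq_orderedProd {F : ℤ → A} {M : ℕ} (hF : ∀ i : ℤ, (M : ℤ) < |i| → F i = 1)
    (htop : ∀ i : ℤ, 0 < i → F i = 1) : tailProd F = orderedProd F M := by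
  rw [orderedProd_eq_lowerProd htop, tailProd_eq_lowerProd fun i hi => hF _ ?_]
  rw [abs_neg, Nat.abs_cast]
  omega

end OrderedProducts

section Orbits

variable {A B : Type*} [Group A] [Group B] {b : B}

lemma zpow_mul_injective (hb : ∀ k : ℤ, b ^ k = 1 → k = 0) (t : B) :
    Injective fun i : ℤ => b ^ i * t := fun i j hij => by
  have := hb (i - j) (by rw [zpow_sub, mul_right_cancel hij, mul_inv_cancel])
  omega

lemma exists_forall_lt_abs_apply_zpow_mul_eq_one (hb : ∀ k : ℤ, b ^ k = 1 → k = 0) {φ : B → A}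
    (hφ : (mulSupport φ).Finite) (t : B) :
    ∃ M : ℕ, ∀ i : ℤ, (M : ℤ) < |i| → φ (b ^ i * t) = 1 := by
  obtain ⟨K, hK⟩ := ((hφ.preimage (zpow_mul_injective hb t).injOn).image fun i => |i|).bddAbove
  refine ⟨K.toNat, fun i hi => not_not.mp fun hne => ?_⟩
  have : |i| ≤ K := hK ⟨i, hne, rfl⟩
  omega

end Orbits

section Wreath

variable {A B : Type*} [Group A] [Group B]

namespace RegularWreathProduct

lemma equivProd_symm_wmul (p q : (B → A) × B) :
    (equivProd A B).symm (wmul p q) = (equivProd A B).symm p * (equivProd A B).symm q :=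
  rfl

variable (A B) in
def restricted : Subgroup (A ≀ᵣ B) where
  carrier := {w | (mulSupport w.left).Finite}
  one_mem' := by simp
  mul_mem' {v w} (hv : (mulSupport v.left).Finite) (hw : (mulSupport w.left).Finite) :=
    (hv.union (hw.preimage (mul_right_injective v.right⁻¹).injOn)).subset (mulSupport_mul _ _)
  inv_mem' {w} (hw : (mulSupport w.left).Finite) :=
    (hw.preimage (mul_right_injective w.right).injOn).subset fun x hx => by simpa using hx

end RegularWreathProduct

open RegularWreathProduct in
lemma exists_wmul_conj_zpow_mul {f g h₀ : B → A} {b c z₀ : B} (hf : (mulSupport f).Finite)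
    (hh₀ : (mulSupport h₀).Finite) (hconj : wmul (f, b) (h₀, z₀) = wmul (h₀, z₀) (g, c))
    (n : ℤ) : ∃ h : B → A, (mulSupport h).Finite ∧
      wmul (f, b) (h, b ^ n * z₀) = wmul (h, b ^ n * z₀) (g, c) := by
  set e := (equivProd A B).symm
  have hsemi : SemiconjBy (e (f, b) ^ n * e (h₀, z₀)) (e (g, c)) (e (f, b)) :=
    SemiconjBy.mul_left ((Commute.refl _).zpow_left n) (congrArg e hconj).symm
  set q := e (f, b) ^ n * e (h₀, z₀)
  have hq : e (q.left, b ^ n * z₀) = q := by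
    ext : 1
    · rfl
    · exact (congrArg (· * z₀) (map_zpow rightHom (e (f, b)) n)).symm
  refine ⟨q.left, mul_mem (zpow_mem (K := restricted A B) hf n) hh₀, e.injective ?_⟩
  rw [equivProd_symm_wmul, equivProd_symm_wmul, hq]
  exact hsemi.symm

end Wreath

section Conjugacy

variable {A B : Type*} [Group A] [Group B] {f : B → A} {b : B}

lemma exists_mem_mulSupport_of_wmul_conj (hb : ∀ k : ℤ, b ^ k = 1 → k = 0) {g h : B → A}
    {c z t : B} {M : ℕ} (hh : (mulSupport h).Finite)
    (hconj : wmul (f, b) (h, z) = wmul (h, z) (g, c))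
    (hM : ∀ i : ℤ, (M : ℤ) < |i| → f (b ^ i * t) = 1)
    (hne : orderedProd (fun i => f (b ^ i * t)) M ≠ 1) :
    ∃ j : ℤ, z⁻¹ * (b ^ j * t) ∈ mulSupport g := by
  by_contra! hg
  have hrec (j : ℤ) : h (b ^ j * t) = f (b ^ j * t) * h (b ^ (j - 1) * t) := by
    have := congrFun (congrArg Prod.fst hconj) (b ^ j * t)
    simp only [wmul] at this
    rw [show b⁻¹ * (b ^ j * t) = b ^ (j - 1) * t by group, notMem_mulSupport.mp (hg j),
      mul_one] at this
    exact this.symm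
  obtain ⟨M', hM'⟩ := exists_forall_lt_abs_apply_zpow_mul_eq_one hb hh t
  exact hne (orderedProd_eq_one_of_forall_eq_mul hrec hM hM')

lemma tailProd_zpow_mul_eq_mul (hb : ∀ k : ℤ, b ^ k = 1 → k = 0) (hf : (mulSupport f).Finite)
    (x : B) :
    tailProd (fun i => f (b ^ i * x)) = f x * tailProd fun i => f (b ^ i * (b⁻¹ * x)) := by
  obtain ⟨M, hM⟩ := exists_forall_lt_abs_apply_zpow_mul_eq_one hb hf x
  rw [tailProd_eq_mul_tailProd (N := M + 1) fun i hi => hM _ (by rw [abs_neg, Nat.abs_cast]; omega)]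
  simp only [zpow_zero, one_mul, ← mul_assoc, ← zpow_sub_one]

lemma finite_mulSupport_tailProd_zpow_mul (hb : ∀ k : ℤ, b ^ k = 1 → k = 0)
    (hf : (mulSupport f).Finite)
    (hπ : ∀ (t : B) (M : ℕ), (∀ i : ℤ, (M : ℤ) < |i| → f (b ^ i * t) = 1) →
      orderedProd (fun i => f (b ^ i * t)) M = 1) :
    (mulSupport fun x => tailProd fun i => f (b ^ i * x)).Finite := by
  choose M hM using exists_forall_lt_abs_apply_zpow_mul_eq_one hb hf
  refine (hf.biUnion fun s _ => (Set.finite_Iio (M s)).image fun i : ℕ => b ^ (i : ℤ) * s).subset ?_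
  intro x hx
  obtain ⟨i, hi⟩ := exists_ne_one_of_tailProd_ne_one hx
  obtain ⟨m, hm, hfm⟩ : ∃ m : ℤ, 0 < m ∧ f (b ^ m * x) ≠ 1 := by
    by_contra! htop
    exact hx ((tailProd_eq_orderedProd (hM x) htop).trans (hπ x _ (hM x)))
  have hfm' : f (b ^ (m + i) * (b ^ (-i : ℤ) * x)) ≠ 1 := by
    rwa [← mul_assoc, ← zpow_add, add_neg_cancel_right]
  have hle : |m + i| ≤ M _ := not_lt.mp fun hlt => hfm' (hM _ _ hlt)
  refine Set.mem_biUnion hi ⟨i, ?_, by group⟩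
  rw [abs_of_pos (by omega)] at hle
  exact Set.mem_Iio.mpr (by omega)

lemma exists_orderedProd_ne_one_of_not_wmul_conj (hb : ∀ k : ℤ, b ^ k = 1 → k = 0)
    (hf : (mulSupport f).Finite)
    (hnot : ¬ ∃ (h : B → A) (z : B), (mulSupport h).Finite ∧
        wmul (f, b) (h, z) = wmul (h, z) ((fun _ => 1), b)) :
    ∃ (t : B) (M : ℕ), (∀ i : ℤ, (M : ℤ) < |i| → f (b ^ i * t) = 1) ∧
      orderedProd (fun i => f (b ^ i * t)) M ≠ 1 := by
  by_contra! hπ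
  refine hnot ⟨_, 1, finite_mulSupport_tailProd_zpow_mul hb hf hπ, ?_⟩
  simp only [wmul, one_mul, mul_one]
  exact Prod.ext (funext fun x => (tailProd_zpow_mul_eq_mul hb hf x).symm) rfl

end Conjugacy

lemma le_add_apply_inv_mul {B R : Type*} [Group B] [Add R] [LE R] {ℓ : B → R}
    (hmul : ∀ u v : B, ℓ (u * v) ≤ ℓ u + ℓ v) (hinv : ∀ u : B, ℓ u⁻¹ = ℓ u) (x z : B) :
    ℓ z ≤ ℓ x + ℓ (z⁻¹ * x) := by
  have := hmul x (z⁻¹ * x)⁻¹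
  rwa [hinv, mul_inv_rev, inv_inv, mul_inv_cancel_left] at this

theorem wreath_short_conjugator_B_component_general {A B : Type*} [Group A] [Group B]
    (f g h₀ : B → A) (b c z₀ : B)
    (hf : (Function.mulSupport f).Finite)
    (hh₀ : (Function.mulSupport h₀).Finite)
    (hb : ∀ k : ℤ, b ^ k = 1 → k = 0)
    (hnot : ¬ ∃ (h : B → A) (z : B), (Function.mulSupport h).Finite ∧
        wmul (f, b) (h, z) = wmul (h, z) ((fun _ => 1), b))
    (hconj : wmul (f, b) (h₀, z₀) = wmul (h₀, z₀) (g, c)) :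
    ∃ (k j : ℤ) (h : B → A), (Function.mulSupport h).Finite ∧
      wmul (f, b) (h, b ^ (k - j) * z₀) = wmul (h, b ^ (k - j) * z₀) (g, c) ∧
      ∃ (x t : B), x ∈ Function.mulSupport f ∧ (∃ m : ℤ, x = b ^ m * t) ∧
        (∃ M : ℕ, (∀ i : ℤ, (M : ℤ) < |i| → f (b ^ i * t) = 1) ∧
          orderedProd (fun i => f (b ^ i * t)) M ≠ 1) ∧
        (b ^ (k - j) * z₀)⁻¹ * x ∈ Function.mulSupport g ∧
        ∀ ℓ : B → ℝ, (∀ u v : B, ℓ (u * v) ≤ ℓ u + ℓ v) →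
          (∀ u : B, ℓ u⁻¹ = ℓ u) →
          ℓ (b ^ (k - j) * z₀) ≤ ℓ x + ℓ ((b ^ (k - j) * z₀)⁻¹ * x) := by
  obtain ⟨t, M, hM, hne⟩ := exists_orderedProd_ne_one_of_not_wmul_conj hb hf hnot
  obtain ⟨k, hk⟩ := exists_ne_one_of_orderedProd_ne_one hne
  obtain ⟨j, hj⟩ := exists_mem_mulSupport_of_wmul_conj hb hh₀ hconj hM hne
  obtain ⟨h, hh, hconj'⟩ := exists_wmul_conj_zpow_mul hf hh₀ hconj (k - j)
  have hx : (b ^ (k - j) * z₀)⁻¹ * (b ^ k * t) = z₀⁻¹ * (b ^ j * t) := by group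
  exact ⟨k, j, h, hh, hconj', b ^ k * t, t, hk, ⟨k, rfl⟩, ⟨M, hM, hne⟩, hx ▸ hj,
    fun ℓ hmul hinv => le_add_apply_inv_mul hmul hinv _ _⟩

/-- Let `b` have infinite order and suppose `(f,b)` is not
conjugate to `(1,b)` in `A ≀ B`. If `(h₀, z₀)` is any conjugator of `(f,b)` and
`(g,c)`, then there are integers `k, j` and a conjugator `(h, z)` with
`z = b^{k-j} z₀`, such that `z⁻¹x ∈ supp(g)` for some `x ∈ supp(f)` lying in a
coset `⟨b⟩t` on which `π_t(f) ≠ e_A`. Consequently, for every (left-invariant)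
word-length-type function `ℓ` on `B` (subadditive and symmetric),
`ℓ(z) ≤ ℓ(x) + ℓ(z⁻¹x)`. -/
theorem wreath_short_conjugator_B_component {A B : Type*} [Group A] [Group B]
    (f g h₀ : B → A) (b c z₀ : B)
    (hf : (Function.mulSupport f).Finite)
    (hg : (Function.mulSupport g).Finite)
    (hh₀ : (Function.mulSupport h₀).Finite)
    (hb : ∀ k : ℤ, b ^ k = 1 → k = 0)
    (hnot : ¬ ∃ (h : B → A) (z : B), (Function.mulSupport h).Finite ∧
        wmul (f, b) (h, z) = wmul (h, z) ((fun _ => 1), b))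
    (hconj : wmul (f, b) (h₀, z₀) = wmul (h₀, z₀) (g, c)) :
    ∃ (k j : ℤ) (h : B → A), (Function.mulSupport h).Finite ∧
      wmul (f, b) (h, b ^ (k - j) * z₀) = wmul (h, b ^ (k - j) * z₀) (g, c) ∧
      ∃ (x t : B), x ∈ Function.mulSupport f ∧ (∃ m : ℤ, x = b ^ m * t) ∧
        (∃ M : ℕ, (∀ i : ℤ, (M : ℤ) < |i| → f (b ^ i * t) = 1) ∧
          orderedProd (fun i => f (b ^ i * t)) M ≠ 1) ∧
        (b ^ (k - j) * z₀)⁻¹ * x ∈ Function.mulSupport g ∧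
        ∀ ℓ : B → ℝ, (∀ u v : B, ℓ (u * v) ≤ ℓ u + ℓ v) →
          (∀ u : B, ℓ u⁻¹ = ℓ u) →
          ℓ (b ^ (k - j) * z₀) ≤ ℓ x + ℓ ((b ^ (k - j) * z₀)⁻¹ * x) :=
  wreath_short_conjugator_B_component_general f g h₀ b c z₀ hf hh₀ hb hnot hconj
end
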